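/- Let m ≥ 1 be a natural number, ϖ_m = 2∫_0^1 (1-t^m)^(-1/2) dt, and let φ : ℝ → ℝ satisfy: x = ∫_0^{φ(x)} (1-t^m)^(-1/2) dt and 0 ≤ φ(x) ≤ 1 for all x ∈ [0, ϖ_m/2], and φ(ϖ_m - x) = φ(x) for all x ∈ [0, ϖ_m]. Define I(n) = ∫_0^{ϖ_m} φ(x)^n dx for integers n ≥ 0. Then for all n ≥ 0, 2(n+1)/(2(n+1)+m) ≤ I(n+1)/I(n) ≤ 1. -/

import Mathlib

/-!
On `[0, ϖ/2]` the clover function inverts the arc length integral, so it is an increasing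
solution of `φ' = √(1 - φ ^ m)` with `φ 0 = 0` and `φ (ϖ/2) = 1`. Differentiating
`φ ^ (n + 1) * √(1 - φ ^ m)` and integrating over `[0, ϖ/2]` gives the recurrence
`(n + 1) K n = (n + 1 + m/2) K (n + m)` for `K n = ∫_0^{ϖ/2} φ ^ n = I n / 2` (by the symmetry
`φ (ϖ - x) = φ x`). Since `0 ≤ φ ≤ 1`, `K` is decreasing, so `K (n + m) ≤ K (n + 1) ≤ K n`,
and the recurrence turns the left inequality into the lower bound.
-/

open MeasureTheory intervalIntegral Set

theorem one_sub_pow_pos_of_abs_lt_one {m : ℕ} (hm : m ≠ 0) {t : ℝ} (ht : |t| < 1) :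
    0 < 1 - t ^ m := by
  have := pow_lt_one₀ (abs_nonneg t) ht hm
  rw [← abs_pow] at this
  linarith [le_abs_self (t ^ m)]

theorem MonotoneOn.continuousOn_Icc_of_surjOn {f : ℝ → ℝ} {a b : ℝ} (hab : a ≤ b)
    (hf : MonotoneOn f (Icc a b)) (hsurj : SurjOn f (Icc a b) (Icc (f a) (f b))) :
    ContinuousOn f (Icc a b) := by
  -- extend `f` with slope one outside `[a, b]` to a monotone surjection of `ℝ`
  set F : ℝ → ℝ := fun x => f (projIcc a b hab x) + min 0 (x - a) + max 0 (x - b)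
  have hF : Monotone F := by
    have hfp : Monotone fun x => f (projIcc a b hab x) := fun x y hxy =>
      hf (projIcc a b hab x).2 (projIcc a b hab y).2 (monotone_projIcc hab hxy)
    exact (hfp.add fun x y hxy => min_le_min_left _ (by linarith)).add
      fun x y hxy => max_le_max_left _ (by linarith)
  have hFsurj : Function.Surjective F := by
    intro y
    rcases lt_or_ge y (f a) with hya | hya
    · refine ⟨a + (y - f a), ?_⟩
      simp [F, projIcc_of_le_left hab (by linarith : a + (y - f a) ≤ a),
        min_eq_right (by linarith : y - f a ≤ 0), max_eq_left (by linarith : a + (y - f a) - b ≤ 0)]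
    rcases le_or_gt y (f b) with hyb | hyb
    · obtain ⟨x, hx, rfl⟩ := hsurj ⟨hya, hyb⟩
      refine ⟨x, ?_⟩
      simp [F, projIcc_of_mem hab hx, hx.1, hx.2]
    · refine ⟨b + (y - f b), ?_⟩
      simp [F, projIcc_of_right_le hab (by linarith : b ≤ b + (y - f b)),
        min_eq_left (by linarith : 0 ≤ b + (y - f b) - a), max_eq_right (by linarith : 0 ≤ y - f b)]
  refine (hF.continuous_of_surjective hFsurj).continuousOn.congr fun x hx => ?_
  simp [F, projIcc_of_mem hab hx, hx.1, hx.2]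

theorem integral_eq_two_mul_integral_half_of_symm {f : ℝ → ℝ} {p : ℝ} (hp : 0 ≤ p)
    (hsymm : ∀ x ∈ Icc 0 p, f (p - x) = f x) (hf : IntervalIntegrable f volume 0 (p / 2)) :
    ∫ x in 0..p, f x = 2 * ∫ x in 0..p / 2, f x := by
  have hp2 : p - p / 2 = p / 2 := by ring
  have hf' : IntervalIntegrable f volume (p / 2) p := by
    have h := (hf.comp_sub_left p).symm
    rw [sub_zero, hp2] at h
    refine h.congr fun x hx => hsymm x ?_
    rw [uIoc_of_le (by linarith)] at hx
    exact ⟨by linarith [hx.1], hx.2⟩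
  have hright : ∫ x in p / 2..p, f x = ∫ x in 0..p / 2, f x := by
    have h := integral_comp_sub_left f p (a := 0) (b := p / 2)
    rw [sub_zero, hp2] at h
    rw [← h]
    refine integral_congr fun x hx => hsymm x ?_
    rw [uIcc_of_le (by linarith)] at hx
    exact ⟨hx.1, by linarith [hx.2]⟩
  rw [← integral_add_adjacent_intervals hf hf', hright, two_mul]

theorem integral_pow_recurrence_of_hasDerivAt {φ : ℝ → ℝ} {a : ℝ} {m : ℕ} (ha : 0 ≤ a)
    (hcont : ContinuousOn φ (Icc 0 a))
    (hderiv : ∀ x ∈ Ioo 0 a, HasDerivAt φ (√(1 - φ x ^ m)) x)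
    (hlt : ∀ x ∈ Ioo 0 a, φ x ^ m < 1) (h0 : φ 0 = 0) (ha1 : φ a = 1) (n : ℕ) :
    (n + 1) * ∫ x in 0..a, φ x ^ n = (n + 1 + m / 2) * ∫ x in 0..a, φ x ^ (n + m) := by
  set F : ℝ → ℝ := fun x => φ x ^ (n + 1) * √(1 - φ x ^ m)
  set D : ℝ → ℝ := fun x => (n + 1) * φ x ^ n - (n + 1 + m / 2) * φ x ^ (n + m)
  have hF : ∀ x ∈ Ioo 0 a, HasDerivAt F (D x) x := by
    intro x hx
    have hpos : 0 < 1 - φ x ^ m := sub_pos.2 (hlt x hx)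
    have hm : m ≠ 0 := by rintro rfl; simp at hpos
    have hsq : √(1 - φ x ^ m) * √(1 - φ x ^ m) = 1 - φ x ^ m := Real.mul_self_sqrt hpos.le
    have hpow : φ x ^ (n + 1) * φ x ^ (m - 1) = φ x ^ (n + m) := by
      rw [← pow_add]; congr 1; omega
    have hsqrt : HasDerivAt (fun y => √(1 - φ y ^ m)) (-(m / 2 * φ x ^ (m - 1))) x := by
      convert (((hderiv x hx).fun_pow m).const_sub 1).sqrt hpos.ne' using 1
      field_simp
    refine (((hderiv x hx).fun_pow (n + 1)).fun_mul hsqrt).congr_deriv ?_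
    simp only [D, Nat.add_sub_cancel]
    push_cast
    linear_combination ((n + 1 : ℝ) * φ x ^ n) * hsq - (m / 2 : ℝ) * hpow
  have hint : ∀ k : ℕ, IntervalIntegrable (fun x => φ x ^ k) volume 0 a := fun k =>
    ((hcont.pow k).mono (uIcc_of_le ha).subset).intervalIntegrable
  have hFTC : ∫ x in 0..a, D x = F a - F 0 :=
    integral_eq_sub_of_hasDeriv_right_of_le ha
      ((hcont.pow _).mul (continuousOn_const.sub (hcont.pow m)).sqrt)
      (fun x hx => (hF x hx).hasDerivWithinAt)
      (((hint n).const_mul _).sub ((hint (n + m)).const_mul _))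
  have hF0 : F 0 = 0 := by simp [F, h0]
  have hFa : F a = 0 := by simp [F, ha1]
  rw [hF0, hFa, sub_zero, integral_sub ((hint n).const_mul _) ((hint (n + m)).const_mul _),
    intervalIntegral.integral_const_mul, intervalIntegral.integral_const_mul] at hFTC
  linarith

theorem ratio_bounds_of_recurrence {K : ℕ → ℝ} {m : ℕ} (hm : 1 ≤ m) (hpos : ∀ n, 0 < K n)
    (hanti : Antitone K) (hrec : ∀ n : ℕ, (n + 1) * K n = (n + 1 + m / 2) * K (n + m)) (n : ℕ) :
    2 * ((n : ℝ) + 1) / (2 * ((n : ℝ) + 1) + m) ≤ K (n + 1) / K n ∧ K (n + 1) / K n ≤ 1 := by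
  have hKn := hpos n
  refine ⟨?_, div_le_one_of_le₀ (hanti n.le_succ) hKn.le⟩
  have hratio : K (n + m) / K n = 2 * ((n : ℝ) + 1) / (2 * ((n : ℝ) + 1) + m) := by
    rw [div_eq_div_iff hKn.ne' (by positivity)]
    linear_combination (-2 : ℝ) * hrec n
  rw [← hratio]
  gcongr
  exact hanti (by omega)

namespace Clover

variable {m : ℕ}

noncomputable def density (m : ℕ) (t : ℝ) : ℝ := (1 - t ^ m) ^ (-(1 / 2) : ℝ)

noncomputable def arcLength (m : ℕ) (r : ℝ) : ℝ := ∫ t in (0 : ℝ)..r, density m t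

theorem density_nonneg {t : ℝ} (ht0 : 0 ≤ t) (ht1 : t ≤ 1) : 0 ≤ density m t :=
  Real.rpow_nonneg (sub_nonneg.2 (pow_le_one₀ ht0 ht1)) _

theorem density_pos (hm : m ≠ 0) {t : ℝ} (ht0 : 0 ≤ t) (ht1 : t < 1) : 0 < density m t :=
  Real.rpow_pos_of_pos (one_sub_pow_pos_of_abs_lt_one hm (by rwa [abs_of_nonneg ht0])) _

theorem continuousAt_density (hm : m ≠ 0) {t : ℝ} (ht : |t| < 1) : ContinuousAt (density m) t :=
  (continuousAt_const.sub (continuous_pow m).continuousAt).rpow_const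
    (Or.inl (one_sub_pow_pos_of_abs_lt_one hm ht).ne')

theorem density_le (hm : m ≠ 0) {t : ℝ} (ht0 : 0 ≤ t) (ht1 : t ≤ 1) :
    density m t ≤ (1 - t) ^ (-(1 / 2) : ℝ) := by
  rcases ht1.lt_or_eq with ht1 | rfl
  · have htm : t ^ m ≤ t := pow_le_of_le_one ht0 ht1.le hm
    exact Real.rpow_le_rpow_of_nonpos (by linarith) (by linarith) (by norm_num)
  · simp [density]

theorem intervalIntegrable_density (hm : m ≠ 0) {a b : ℝ} (ha : a ∈ Icc (0 : ℝ) 1)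
    (hb : b ∈ Icc (0 : ℝ) 1) : IntervalIntegrable (density m) volume a b := by
  have hdom : IntervalIntegrable (fun t : ℝ => (1 - t) ^ (-(1 / 2) : ℝ)) volume 0 1 := by
    simpa using ((intervalIntegral.intervalIntegrable_rpow' (a := 0) (b := 1)
      (r := -(1 / 2)) (by norm_num)).comp_sub_left 1).symm
  have h01 : IntervalIntegrable (density m) volume 0 1 := by
    have hmeas : Measurable (density m) :=
      (measurable_const.sub (measurable_id.pow_const m)).pow_const _
    refine hdom.mono_fun' hmeas.aestronglyMeasurable ?_
    refine (ae_restrict_iff' measurableSet_uIoc).2 (.of_forall fun t ht => ?_)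
    rw [uIoc_of_le zero_le_one] at ht
    exact (Real.norm_of_nonneg (density_nonneg ht.1.le ht.2)).trans_le
      (density_le hm ht.1.le ht.2)
  exact h01.mono_set (uIcc_subset_uIcc (by simpa using ha) (by simpa using hb))

theorem arcLength_zero : arcLength m 0 = 0 := integral_same

theorem arcLength_strictMonoOn (hm : m ≠ 0) : StrictMonoOn (arcLength m) (Icc 0 1) := by
  intro a ha b hb hab
  have hpos : 0 < ∫ t in a..b, density m t :=
    intervalIntegral_pos_of_pos_on (intervalIntegrable_density hm ha hb)
      (fun t ht => density_pos hm (ha.1.trans ht.1.le) (ht.2.trans_le hb.2)) hab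
  have hsub : arcLength m b - arcLength m a = ∫ t in a..b, density m t :=
    integral_interval_sub_left (intervalIntegrable_density hm (left_mem_Icc.2 zero_le_one) hb)
      (intervalIntegrable_density hm (left_mem_Icc.2 zero_le_one) ha)
  linarith

theorem arcLength_mapsTo (hm : m ≠ 0) :
    MapsTo (arcLength m) (Icc 0 1) (Icc 0 (arcLength m 1)) := fun _ hr =>
  ⟨arcLength_zero (m := m) ▸
      (arcLength_strictMonoOn hm).monotoneOn (left_mem_Icc.2 zero_le_one) hr hr.1,
    (arcLength_strictMonoOn hm).monotoneOn hr (right_mem_Icc.2 zero_le_one) hr.2⟩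

theorem arcLength_one_pos (hm : m ≠ 0) : 0 < arcLength m 1 :=
  arcLength_zero (m := m) ▸ arcLength_strictMonoOn hm (left_mem_Icc.2 zero_le_one)
    (right_mem_Icc.2 zero_le_one) zero_lt_one

theorem hasDerivAt_arcLength (hm : m ≠ 0) {r : ℝ} (hr0 : 0 ≤ r) (hr1 : r < 1) :
    HasDerivAt (arcLength m) (density m r) r := by
  have hr : |r| < 1 := by rwa [abs_of_nonneg hr0]
  refine integral_hasDerivAt_right (intervalIntegrable_density hm (left_mem_Icc.2 zero_le_one)
    ⟨hr0, hr1.le⟩) ?_ (continuousAt_density hm hr)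
  refine ⟨Ioo (-1) 1, Ioo_mem_nhds (by linarith) hr1, ?_⟩
  exact ContinuousOn.aestronglyMeasurable (fun t ht => (continuousAt_density hm
    (abs_lt.2 ht)).continuousWithinAt) measurableSet_Ioo

/-- The `m`-clover function on `[0, ϖ_m / 2]`, where `ϖ_m / 2 = arcLength m 1`. -/
structure IsCloverFunction (m : ℕ) (φ : ℝ → ℝ) : Prop where
  arcLength_apply : ∀ x ∈ Icc 0 (arcLength m 1), arcLength m (φ x) = x
  mapsTo : MapsTo φ (Icc 0 (arcLength m 1)) (Icc 0 1)

namespace IsCloverFunction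

variable {φ : ℝ → ℝ}

theorem apply_arcLength (hm : m ≠ 0) (h : IsCloverFunction m φ) {r : ℝ} (hr : r ∈ Icc 0 1) :
    φ (arcLength m r) = r :=
  (arcLength_strictMonoOn hm).injOn (h.mapsTo (arcLength_mapsTo hm hr)) hr
    (h.arcLength_apply _ (arcLength_mapsTo hm hr))

theorem apply_zero (hm : m ≠ 0) (h : IsCloverFunction m φ) : φ 0 = 0 := by
  simpa [arcLength_zero] using h.apply_arcLength hm (left_mem_Icc.2 zero_le_one)

theorem apply_arcLength_one (hm : m ≠ 0) (h : IsCloverFunction m φ) : φ (arcLength m 1) = 1 :=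
  h.apply_arcLength hm (right_mem_Icc.2 zero_le_one)

theorem monotoneOn (hm : m ≠ 0) (h : IsCloverFunction m φ) :
    MonotoneOn φ (Icc 0 (arcLength m 1)) := by
  intro x hx y hy hxy
  by_contra! hlt
  have := arcLength_strictMonoOn hm (h.mapsTo hy) (h.mapsTo hx) hlt
  rw [h.arcLength_apply x hx, h.arcLength_apply y hy] at this
  linarith

theorem continuousOn (hm : m ≠ 0) (h : IsCloverFunction m φ) :
    ContinuousOn φ (Icc 0 (arcLength m 1)) := by
  refine (h.monotoneOn hm).continuousOn_Icc_of_surjOn (arcLength_one_pos hm).le ?_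
  rw [h.apply_zero hm, h.apply_arcLength_one hm]
  exact fun r hr => ⟨arcLength m r, arcLength_mapsTo hm hr, h.apply_arcLength hm hr⟩

theorem apply_mem_Ioo (h : IsCloverFunction m φ) {x : ℝ}
    (hx : x ∈ Ioo 0 (arcLength m 1)) : φ x ∈ Ioo 0 1 := by
  have hxI : x ∈ Icc 0 (arcLength m 1) := Ioo_subset_Icc_self hx
  have hinv := h.arcLength_apply x hxI
  refine ⟨(h.mapsTo hxI).1.lt_of_ne fun h0 => ?_, (h.mapsTo hxI).2.lt_of_ne fun h1 => ?_⟩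
  · rw [← h0, arcLength_zero] at hinv
    exact hx.1.ne hinv
  · rw [h1] at hinv
    exact hx.2.ne' hinv

theorem hasDerivAt (hm : m ≠ 0) (h : IsCloverFunction m φ) {x : ℝ}
    (hx : x ∈ Ioo 0 (arcLength m 1)) : HasDerivAt φ (√(1 - φ x ^ m)) x := by
  obtain ⟨hφ0, hφ1⟩ := h.apply_mem_Ioo hx
  have hpos : 0 < 1 - φ x ^ m := sub_pos.2 (pow_lt_one₀ hφ0.le hφ1 hm)
  have hinv : (density m (φ x))⁻¹ = √(1 - φ x ^ m) := by
    rw [density, Real.rpow_neg hpos.le, inv_inv, Real.sqrt_eq_rpow]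
  rw [← hinv]
  exact (hasDerivAt_arcLength hm hφ0.le hφ1).of_local_left_inverse
    ((h.continuousOn hm).continuousAt (Icc_mem_nhds hx.1 hx.2))
    (density_pos hm hφ0.le hφ1).ne'
    (Filter.eventually_of_mem (Icc_mem_nhds hx.1 hx.2) h.arcLength_apply)

theorem intervalIntegrable_pow (hm : m ≠ 0) (h : IsCloverFunction m φ) (n : ℕ) :
    IntervalIntegrable (fun x => φ x ^ n) volume 0 (arcLength m 1) :=
  ((h.continuousOn hm).pow n).intervalIntegrable_of_Icc (arcLength_one_pos hm).le

theorem integral_pow_pos (hm : m ≠ 0) (h : IsCloverFunction m φ) (n : ℕ) :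
    0 < ∫ x in 0..arcLength m 1, φ x ^ n :=
  intervalIntegral_pos_of_pos_on (h.intervalIntegrable_pow hm n)
    (fun _ hx => pow_pos (h.apply_mem_Ioo hx).1 n) (arcLength_one_pos hm)

theorem antitone_integral_pow (hm : m ≠ 0) (h : IsCloverFunction m φ) :
    Antitone fun n : ℕ => ∫ x in 0..arcLength m 1, φ x ^ n := fun _ _ hjk =>
  integral_mono_on (arcLength_one_pos hm).le (h.intervalIntegrable_pow hm _)
    (h.intervalIntegrable_pow hm _)
    (fun _ hx => pow_le_pow_of_le_one (h.mapsTo hx).1 (h.mapsTo hx).2 hjk)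

theorem integral_pow_recurrence (hm : m ≠ 0) (h : IsCloverFunction m φ) (n : ℕ) :
    (n + 1) * ∫ x in 0..arcLength m 1, φ x ^ n =
      (n + 1 + m / 2) * ∫ x in 0..arcLength m 1, φ x ^ (n + m) :=
  integral_pow_recurrence_of_hasDerivAt (arcLength_one_pos hm).le (h.continuousOn hm)
    (fun _ hx => h.hasDerivAt hm hx)
    (fun _ hx => pow_lt_one₀ (h.apply_mem_Ioo hx).1.le (h.apply_mem_Ioo hx).2 hm)
    (h.apply_zero hm) (h.apply_arcLength_one hm) n

end IsCloverFunction

end Clover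

open Clover

/-- **Squeeze bounds for the ratio of consecutive clover integrals.**
Let `m ≥ 1`, `ϖ = 2 ∫_0^1 (1 - t^m)^(-1/2) dt`, `φ` the `m`-clover function, and
`I(n) = ∫_0^ϖ φ(x)^n dx`.  Then `2(n+1)/(2(n+1)+m) ≤ I(n+1)/I(n) ≤ 1` for all `n ≥ 0`. -/
theorem clover_integral_ratio_bounds (m : ℕ) (hm : 1 ≤ m)
    (ϖ : ℝ) (hϖ : ϖ = 2 * ∫ t in (0:ℝ)..1, (1 - t ^ m) ^ (-(1/2) : ℝ))
    (φ : ℝ → ℝ)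
    (hφ : ∀ x ∈ Set.Icc 0 (ϖ / 2),
      x = ∫ t in (0:ℝ)..(φ x), (1 - t ^ m) ^ (-(1/2) : ℝ))
    (hφ01 : ∀ x ∈ Set.Icc 0 (ϖ / 2), φ x ∈ Set.Icc (0:ℝ) 1)
    (hφsymm : ∀ x ∈ Set.Icc 0 ϖ, φ (ϖ - x) = φ x)
    (I : ℕ → ℝ) (hI : ∀ n : ℕ, I n = ∫ x in (0:ℝ)..ϖ, φ x ^ n) :
    ∀ n : ℕ, 2 * ((n : ℝ) + 1) / (2 * ((n : ℝ) + 1) + m) ≤ I (n + 1) / I n ∧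
      I (n + 1) / I n ≤ 1 := by
  have hm0 : m ≠ 0 := by omega
  have hhalf : ϖ / 2 = arcLength m 1 := by
    rw [hϖ, arcLength]
    simp only [density]
    ring
  rw [hhalf] at hφ hφ01
  have hclover : IsCloverFunction m φ := ⟨fun x hx => (hφ x hx).symm, hφ01⟩
  have hI_half : ∀ n, I n = 2 * ∫ x in 0..arcLength m 1, φ x ^ n := fun n => by
    rw [hI, ← hhalf]
    refine integral_eq_two_mul_integral_half_of_symm (by linarith [arcLength_one_pos hm0])
      (fun x hx => by rw [hφsymm x hx]) ?_
    exact hhalf ▸ hclover.intervalIntegrable_pow hm0 n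
  intro n
  rw [hI_half, hI_half, mul_div_mul_left _ _ two_ne_zero]
  exact ratio_bounds_of_recurrence hm (hclover.integral_pow_pos hm0)
    (hclover.antitone_integral_pow hm0) (hclover.integral_pow_recurrence hm0) n
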